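/- For all τ in the upper half-plane ℍ and all z₁, z₂, z₃, z₄ ∈ ℂ, the following identity of Jacobi theta-products holds: θ(τ,z₁)·θ(τ,z₂)·θ(τ,z₃)·θ(τ,z₄) = θ(τ,(−z₁+z₂+z₃+z₄)/2)·θ(τ,(z₁−z₂+z₃+z₄)/2)·θ(τ,(z₁+z₂−z₃+z₄)/2)·θ(τ,(z₁+z₂+z₃−z₄)/2) + θ(τ,(z₁+z₂+z₃+z₄)/2)·θ(τ,(z₁+z₂−z₃−z₄)/2)·θ(τ,(z₁−z₂−z₃+z₄)/2)·θ(τ,(z₁−z₂+z₃−z₄)/2). -/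

import Mathlib

open Complex Matrix
open scoped Real BigOperators Classical

noncomputable section

abbrev SL2Z := Matrix.SpecialLinearGroup (Fin 2) ℤ

/-- The integral bilinear form attached to a Gram matrix `S`. -/
def bilinZ {ι : Type*} [Fintype ι] (S : Matrix ι ι ℤ) (x y : ι → ℤ) : ℤ :=
  ∑ i, ∑ j, x i * S i j * y j

def bilinQ {ι : Type*} [Fintype ι] (S : Matrix ι ι ℤ) (x y : ι → ℚ) : ℚ :=
  ∑ i, ∑ j, x i * (S i j : ℚ) * y j

def bilinR {ι : Type*} [Fintype ι] (S : Matrix ι ι ℤ) (x y : ι → ℝ) : ℝ :=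
  ∑ i, ∑ j, x i * (S i j : ℝ) * y j

def bilinC {ι : Type*} [Fintype ι] (S : Matrix ι ι ℤ) (x y : ι → ℂ) : ℂ :=
  ∑ i, ∑ j, x i * (S i j : ℂ) * y j

/-- `S` is the Gram matrix of an even positive definite lattice. -/
structure IsEvenPosDef {ι : Type*} [Fintype ι] (S : Matrix ι ι ℤ) : Prop where
  symm : S.IsSymm
  posdef : ∀ x : ι → ℚ, x ≠ 0 → 0 < bilinQ S x x
  even_diag : ∀ i, (2 : ℤ) ∣ S i i

/-- `l ∈ (1/2) L^∨`, written in lattice coordinates:  `2(l,x) ∈ ℤ` for every lattice vector. -/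
def InHalfDual {ι : Type*} [Fintype ι] (S : Matrix ι ι ℤ) (l : ι → ℚ) : Prop :=
  ∀ x : ι → ℤ, ∃ m : ℤ, 2 * bilinQ S l (fun i => (x i : ℚ)) = m

/-- `φ` is a holomorphic Jacobi form of weight `k` and index `t` for the lattice `(ℤ^ι, S)`
with `SL₂(ℤ)`-character (multiplier system) `χ`, Heisenberg character `ν`,
and Fourier coefficients `f`. -/
structure IsJacobiForm {ι : Type*} [Fintype ι] (S : Matrix ι ι ℤ) (k t : ℚ)
    (χ : SL2Z → ℂ) (ν : (ι → ℤ) → (ι → ℤ) → ℂ)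
    (f : ℚ × (ι → ℚ) → ℂ) (φ : ℂ → (ι → ℂ) → ℂ) : Prop where
  holo : DifferentiableOn ℂ (fun p : ℂ × (ι → ℂ) => φ p.1 p.2) {p | 0 < p.1.im}
  modular : ∀ A : SL2Z, ∀ τ : ℂ, 0 < τ.im → ∀ z : ι → ℂ,
    φ (((A.1 0 0 : ℂ) * τ + (A.1 0 1 : ℂ)) / ((A.1 1 0 : ℂ) * τ + (A.1 1 1 : ℂ)))
        (fun i => z i / ((A.1 1 0 : ℂ) * τ + (A.1 1 1 : ℂ)))
      = χ A * ((A.1 1 0 : ℂ) * τ + (A.1 1 1 : ℂ)) ^ (k : ℂ)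
        * Complex.exp ((π : ℂ) * I * (t : ℂ) * (A.1 1 0 : ℂ) * bilinC S z z
            / ((A.1 1 0 : ℂ) * τ + (A.1 1 1 : ℂ)))
        * φ τ z
  elliptic : ∀ x y : ι → ℤ, ∀ τ : ℂ, 0 < τ.im → ∀ z : ι → ℂ,
    φ τ (fun i => z i + (x i : ℂ) * τ + (y i : ℂ))
      = ν x y * Complex.exp (-((π : ℂ) * I * (t : ℂ))
            * ((bilinZ S x x : ℂ) * τ + 2 * bilinC S (fun i => (x i : ℂ)) z))
        * φ τ z
  support : ∀ p : ℚ × (ι → ℚ), f p ≠ 0 →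
    0 ≤ p.1 ∧ InHalfDual S p.2 ∧ 0 ≤ 2 * p.1 * t - bilinQ S p.2 p.2
  expansion : ∀ τ : ℂ, 0 < τ.im → ∀ z : ι → ℂ,
    HasSum (fun p : ℚ × (ι → ℚ) =>
        f p * Complex.exp (2 * (π : ℂ) * I *
          ((p.1 : ℂ) * τ + bilinC S (fun i => (p.2 i : ℂ)) z))) (φ τ z)

/-- The Fourier coefficients `f` are supported on indices of positive hyperbolic norm
(cusp form condition). -/
def IsCuspSupport {ι : Type*} [Fintype ι] (S : Matrix ι ι ℤ) (t : ℚ)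
    (f : ℚ × (ι → ℚ) → ℂ) : Prop :=
  ∀ p : ℚ × (ι → ℚ), f p ≠ 0 → 0 < 2 * p.1 * t - bilinQ S p.2 p.2

/-- `c` is a root of unity. -/
def HasFiniteOrder (c : ℂ) : Prop := ∃ N : ℕ, 0 < N ∧ c ^ N = 1

/-- The quadratic character mod 4. -/
def chi4 (n : ℤ) : ℂ := if n % 4 = 1 then 1 else if n % 4 = 3 then -1 else 0

/-- The classical Jacobi theta-series of characteristic `(1/2,1/2)`. -/
def jtheta (τ z : ℂ) : ℂ :=
  ∑' n : ℤ, chi4 n *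
    Complex.exp (2 * (π : ℂ) * I * (((n : ℂ) ^ 2 * τ) / 8 + (n : ℂ) * z / 2))

/-- The Dedekind eta function. -/
def dedekindEta (τ : ℂ) : ℂ :=
  Complex.exp ((π : ℂ) * I * τ / 12) *
    ∏' n : ℕ, (1 - Complex.exp (2 * (π : ℂ) * I * ((n : ℂ) + 1) * τ))

/-!
Multiplying out, `θ(z₁)θ(z₂)θ(z₃)θ(z₄)` is a single series over `n ∈ ℤ⁴` with summand
`χ(n₁)χ(n₂)χ(n₃)χ(n₄) e(|n|²τ/8 + n·z/2)`. Only vectors with odd coordinates contribute; they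
split according to the coordinate sum mod 4 into `oddQuad 0`, where the character product is `1`,
and `oddQuad 2`, where it is `-1`. The two maps `H` (`halfReflect`) and `K` (`halfHadamard`) are
orthogonal, act on `ℂ⁴` and on the relevant integer vectors, and the summand only depends on
`|n|²` and `n·z`. Substituting `n ↦ Hn` on `oddQuad 0` and `n ↦ Kn` on `oddQuad 2` therefore turns
the two partial sums for `z` into the same partial sums for `Hz` and `Kz`. The two remaining
partial sums, over `oddQuad 2` for `Hz` and over `oddQuad 0` for `Kz`, cancel: `HK` maps
`oddQuad 0` onto `oddQuad 2`, `(HKn)·(Hz) = n·(Kz)`, and the character changes sign.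
-/

section ProductOfSeries

variable {R : Type*} [NormedRing R] {α β γ δ : Type*}
  {f : α → R} {g : β → R} {h : γ → R} {k : δ → R}

theorem summable_norm_mul_mul_mul (hf : Summable (‖f ·‖)) (hg : Summable (‖g ·‖))
    (hh : Summable (‖h ·‖)) (hk : Summable (‖k ·‖)) :
    Summable fun n : α × β × γ × δ => ‖f n.1 * (g n.2.1 * (h n.2.2.1 * k n.2.2.2))‖ :=
  hf.mul_norm (g := fun n : β × γ × δ => g n.1 * (h n.2.1 * k n.2.2))
    (hg.mul_norm (g := fun n : γ × δ => h n.1 * k n.2) (hh.mul_norm hk))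

theorem tsum_mul_tsum_mul_tsum_mul_tsum [CompleteSpace R] (hf : Summable (‖f ·‖))
    (hg : Summable (‖g ·‖)) (hh : Summable (‖h ·‖)) (hk : Summable (‖k ·‖)) :
    (∑' a, f a) * ((∑' b, g b) * ((∑' c, h c) * ∑' d, k d))
      = ∑' n : α × β × γ × δ, f n.1 * (g n.2.1 * (h n.2.2.1 * k n.2.2.2)) := by
  rw [tsum_mul_tsum_of_summable_norm hh hk,
    tsum_mul_tsum_of_summable_norm (g := fun n : γ × δ => h n.1 * k n.2) hg (hh.mul_norm hk),
    tsum_mul_tsum_of_summable_norm (g := fun n : β × γ × δ => g n.1 * (h n.2.1 * k n.2.2)) hf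
      (hg.mul_norm (g := fun n : γ × δ => h n.1 * k n.2) (hh.mul_norm hk))]

end ProductOfSeries

abbrev Quad (R : Type*) := R × R × R × R

namespace Quad

variable {R S : Type*}

def map (f : R → S) (v : Quad R) : Quad S := (f v.1, f v.2.1, f v.2.2.1, f v.2.2.2)

def sum [Add R] (v : Quad R) : R := v.1 + v.2.1 + v.2.2.1 + v.2.2.2

def dot [Add R] [Mul R] (u v : Quad R) : R :=
  u.1 * v.1 + u.2.1 * v.2.1 + u.2.2.1 * v.2.2.1 + u.2.2.2 * v.2.2.2

/-- Minus the reflection in the hyperplane orthogonal to `(1, 1, 1, 1)`. -/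
def halfReflect [Ring R] [Div R] (v : Quad R) : Quad R :=
  ((-v.1 + v.2.1 + v.2.2.1 + v.2.2.2) / 2, (v.1 - v.2.1 + v.2.2.1 + v.2.2.2) / 2,
    (v.1 + v.2.1 - v.2.2.1 + v.2.2.2) / 2, (v.1 + v.2.1 + v.2.2.1 - v.2.2.2) / 2)

/-- Half of a symmetric `4 × 4` Hadamard matrix. -/
def halfHadamard [Ring R] [Div R] (v : Quad R) : Quad R :=
  ((v.1 + v.2.1 + v.2.2.1 + v.2.2.2) / 2, (v.1 + v.2.1 - v.2.2.1 - v.2.2.2) / 2,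
    (v.1 - v.2.1 - v.2.2.1 + v.2.2.2) / 2, (v.1 - v.2.1 + v.2.2.1 - v.2.2.2) / 2)

section Field

variable {K : Type*} [Field K] [CharZero K]

theorem dot_halfReflect_halfReflect (u v : Quad K) :
    dot (halfReflect u) (halfReflect v) = dot u v := by
  simp only [dot, halfReflect]; ring

theorem dot_halfHadamard_halfHadamard (u v : Quad K) :
    dot (halfHadamard u) (halfHadamard v) = dot u v := by
  simp only [dot, halfHadamard]; ring

theorem dot_halfHadamard_left (u v : Quad K) :
    dot (halfHadamard u) v = dot u (halfHadamard v) := by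
  simp only [dot, halfHadamard]; ring

theorem map_intCast_halfReflect {n : Quad ℤ} (h : 2 ∣ sum n) :
    (halfReflect n).map (Int.cast : ℤ → K) = halfReflect (n.map Int.cast) := by
  simp only [sum] at h
  simp only [halfReflect, map, Prod.mk.injEq]
  refine ⟨?_, ?_, ?_, ?_⟩ <;> rw [Int.cast_div (by omega) (by norm_num)] <;> push_cast <;> ring

theorem map_intCast_halfHadamard {n : Quad ℤ} (h : 2 ∣ sum n) :
    (halfHadamard n).map (Int.cast : ℤ → K) = halfHadamard (n.map Int.cast) := by
  simp only [sum] at h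
  simp only [halfHadamard, map, Prod.mk.injEq]
  refine ⟨?_, ?_, ?_, ?_⟩ <;> rw [Int.cast_div (by omega) (by norm_num)] <;> push_cast <;> ring

end Field

def oddQuad (r : ℤ) : Set (Quad ℤ) :=
  {n | n.1 % 2 = 1 ∧ n.2.1 % 2 = 1 ∧ n.2.2.1 % 2 = 1 ∧ n.2.2.2 % 2 = 1 ∧ sum n % 4 = r}

theorem disjoint_oddQuad {r s : ℤ} (h : r ≠ s) : Disjoint (oddQuad r) (oddQuad s) :=
  Set.disjoint_left.2 fun _ hr hs => h (hr.2.2.2.2.symm.trans hs.2.2.2.2)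

theorem two_dvd_sum_of_mem_oddQuad {r : ℤ} {n : Quad ℤ} (h : n ∈ oddQuad r) :
    2 ∣ sum n := by
  obtain ⟨_, _, _, _, _⟩ := h
  simp only [sum] at *
  omega

theorem halfReflect_halfReflect {n : Quad ℤ} (h : 2 ∣ sum n) :
    halfReflect (halfReflect n) = n := by
  simp only [sum] at h
  simp only [halfReflect, Prod.ext_iff]
  omega

theorem halfHadamard_halfHadamard {n : Quad ℤ} (h : 2 ∣ sum n) :
    halfHadamard (halfHadamard n) = n := by
  simp only [sum] at h
  simp only [halfHadamard, Prod.ext_iff]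
  omega

theorem two_dvd_sum_halfHadamard {n : Quad ℤ} (h : 2 ∣ sum n) : 2 ∣ sum (halfHadamard n) := by
  simp only [sum, halfHadamard] at *
  omega

theorem two_dvd_sum_halfReflect {n : Quad ℤ} (h : 2 ∣ sum n) : 2 ∣ sum (halfReflect n) := by
  simp only [sum, halfReflect] at *
  omega

theorem halfReflect_mem_oddQuad_zero {n : Quad ℤ} (h : n ∈ oddQuad 0) :
    halfReflect n ∈ oddQuad 0 := by
  simp only [oddQuad, sum, halfReflect, Set.mem_ofPred_eq] at *
  omega

theorem halfHadamard_mem_oddQuad_two {n : Quad ℤ} (h : n ∈ oddQuad 2) :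
    halfHadamard n ∈ oddQuad 2 := by
  simp only [oddQuad, sum, halfHadamard, Set.mem_ofPred_eq] at *
  omega

theorem halfReflect_halfHadamard_mem_oddQuad_two {n : Quad ℤ} (h : n ∈ oddQuad 0) :
    halfReflect (halfHadamard n) ∈ oddQuad 2 := by
  simp only [oddQuad, sum, halfReflect, halfHadamard, Set.mem_ofPred_eq] at *
  omega

theorem halfHadamard_halfReflect_mem_oddQuad_zero {n : Quad ℤ} (h : n ∈ oddQuad 2) :
    halfHadamard (halfReflect n) ∈ oddQuad 0 := by
  simp only [oddQuad, sum, halfReflect, halfHadamard, Set.mem_ofPred_eq] at *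
  omega

end Quad

theorem norm_chi4_le_one (n : ℤ) : ‖chi4 n‖ ≤ 1 := by
  unfold chi4
  split_ifs <;> simp

theorem chi4_of_emod_two_eq_one {n : ℤ} (h : n % 2 = 1) : chi4 n = (-1) ^ (n / 2) := by
  rcases (by omega : n % 4 = 1 ∨ n % 4 = 3) with h4 | h4
  · rw [chi4, if_pos h4, Even.neg_one_zpow ⟨n / 4, by omega⟩]
  · rw [chi4, if_neg (by omega), if_pos h4, Odd.neg_one_zpow ⟨n / 4, by omega⟩]

theorem emod_two_eq_one_of_chi4_ne_zero {n : ℤ} (h : chi4 n ≠ 0) : n % 2 = 1 := by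
  by_contra hn
  exact h (by rw [chi4, if_neg (by omega), if_neg (by omega)])

def jthetaTerm (τ z : ℂ) (n : ℤ) : ℂ :=
  chi4 n * Complex.exp (2 * (π : ℂ) * I * (((n : ℂ) ^ 2 * τ) / 8 + (n : ℂ) * z / 2))

theorem jtheta_eq_tsum_jthetaTerm (τ z : ℂ) : jtheta τ z = ∑' n, jthetaTerm τ z n := rfl

theorem summable_norm_jthetaTerm {τ : ℂ} (hτ : 0 < τ.im) (z : ℂ) :
    Summable fun n => ‖jthetaTerm τ z n‖ := by
  have hterm (n : ℤ) : jthetaTerm τ z n = chi4 n * jacobiTheta₂_term n (z / 2) (τ / 4) := by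
    rw [jthetaTerm, jacobiTheta₂_term]
    ring_nf
  have hθ : Summable fun n => ‖jacobiTheta₂_term n (z / 2) (τ / 4)‖ :=
    summable_norm_iff.2 <| (summable_jacobiTheta₂_term_iff _ _).2 <| by
      rw [Complex.div_ofNat_im]; positivity
  refine hθ.of_nonneg_of_le (fun _ => norm_nonneg _) fun n => ?_
  rw [hterm, norm_mul]
  exact mul_le_of_le_one_left (norm_nonneg _) (norm_chi4_le_one n)

namespace Quad

def chi (n : Quad ℤ) : ℂ := chi4 n.1 * chi4 n.2.1 * chi4 n.2.2.1 * chi4 n.2.2.2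

theorem chi_of_mem_oddQuad {r : ℤ} {n : Quad ℤ} (h : n ∈ oddQuad r) :
    chi n = (-1) ^ (r / 2) := by
  obtain ⟨ha, hb, hc, hd, hr⟩ := h
  have hne : (-1 : ℂ) ≠ 0 := by norm_num
  obtain ⟨k, hk⟩ : ∃ k, n.1 / 2 + n.2.1 / 2 + n.2.2.1 / 2 + n.2.2.2 / 2 = r / 2 + 2 * k :=
    ⟨(n.1 / 2 + n.2.1 / 2 + n.2.2.1 / 2 + n.2.2.2 / 2 - r / 2) / 2, by
      simp only [sum] at hr; omega⟩
  rw [chi, chi4_of_emod_two_eq_one ha, chi4_of_emod_two_eq_one hb, chi4_of_emod_two_eq_one hc,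
    chi4_of_emod_two_eq_one hd, ← zpow_add₀ hne, ← zpow_add₀ hne, ← zpow_add₀ hne, hk,
    zpow_add₀ hne, (even_two_mul k).neg_one_zpow, mul_one]

theorem mem_oddQuad_of_chi_ne_zero {n : Quad ℤ} (h : chi n ≠ 0) :
    n ∈ oddQuad 0 ∪ oddQuad 2 := by
  simp only [chi, ne_eq, mul_eq_zero, not_or] at h
  obtain ⟨⟨⟨ha, hb⟩, hc⟩, hd⟩ := h
  have ha₂ := emod_two_eq_one_of_chi4_ne_zero ha
  have hb₂ := emod_two_eq_one_of_chi4_ne_zero hb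
  have hc₂ := emod_two_eq_one_of_chi4_ne_zero hc
  have hd₂ := emod_two_eq_one_of_chi4_ne_zero hd
  simp only [oddQuad, sum, Set.mem_union, Set.mem_ofPred_eq]
  omega

def term (τ : ℂ) (z : Quad ℂ) (n : Quad ℤ) : ℂ :=
  chi n * Complex.exp (2 * (π : ℂ) * I *
    (dot (n.map Int.cast) (n.map Int.cast) * τ / 8 + dot (n.map Int.cast) z / 2))

theorem term_eq_mul (τ : ℂ) (z : Quad ℂ) (n : Quad ℤ) :
    term τ z n = jthetaTerm τ z.1 n.1 * (jthetaTerm τ z.2.1 n.2.1 *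
      (jthetaTerm τ z.2.2.1 n.2.2.1 * jthetaTerm τ z.2.2.2 n.2.2.2)) := by
  simp only [jthetaTerm, mul_mul_mul_comm _ (cexp _), ← Complex.exp_add]
  rw [term, chi]
  congr 1
  · ring
  · congr 1
    simp only [dot, map]
    ring

theorem term_congr {τ ε : ℂ} {z w : Quad ℂ} {m n : Quad ℤ} (hχ : chi m = ε * chi n)
    (hnorm : dot (m.map Int.cast) (m.map Int.cast)
      = dot (n.map (Int.cast : ℤ → ℂ)) (n.map Int.cast))
    (hdot : dot (m.map Int.cast) w = dot (n.map Int.cast) z) :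
    term τ w m = ε * term τ z n := by
  rw [term, term, hχ, hnorm, hdot, mul_assoc]

theorem summable_term {τ : ℂ} (hτ : 0 < τ.im) (z : Quad ℂ) : Summable (term τ z) := by
  refine (summable_norm_mul_mul_mul (summable_norm_jthetaTerm hτ z.1)
    (summable_norm_jthetaTerm hτ z.2.1) (summable_norm_jthetaTerm hτ z.2.2.1)
    (summable_norm_jthetaTerm hτ z.2.2.2)).of_norm.congr fun n => ?_
  exact (term_eq_mul τ z n).symm

def thetaProd (τ : ℂ) (z : Quad ℂ) : ℂ :=
  jtheta τ z.1 * jtheta τ z.2.1 * jtheta τ z.2.2.1 * jtheta τ z.2.2.2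

theorem thetaProd_eq_tsum {τ : ℂ} (hτ : 0 < τ.im) (z : Quad ℂ) :
    thetaProd τ z = ∑' n, term τ z n := by
  simp only [thetaProd, jtheta_eq_tsum_jthetaTerm, mul_assoc, term_eq_mul]
  exact tsum_mul_tsum_mul_tsum_mul_tsum (summable_norm_jthetaTerm hτ _)
    (summable_norm_jthetaTerm hτ _) (summable_norm_jthetaTerm hτ _)
    (summable_norm_jthetaTerm hτ _)

theorem thetaProd_eq_add_tsum_oddQuad {τ : ℂ} (hτ : 0 < τ.im) (z : Quad ℂ) :
    thetaProd τ z = ∑' n : oddQuad 0, term τ z n + ∑' n : oddQuad 2, term τ z n := by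
  have hsupp : Function.support (term τ z) ⊆ oddQuad 0 ∪ oddQuad 2 := fun n hn =>
    mem_oddQuad_of_chi_ne_zero (left_ne_zero_of_mul hn)
  rw [thetaProd_eq_tsum hτ, ← tsum_subtype_eq_of_support_subset hsupp,
    Summable.tsum_union_disjoint (disjoint_oddQuad (by norm_num))
      ((summable_term hτ z).subtype _) ((summable_term hτ z).subtype _)]

def halfReflectPerm : Equiv.Perm (oddQuad 0) :=
  Function.Involutive.toPerm (fun n => ⟨halfReflect n, halfReflect_mem_oddQuad_zero n.2⟩)
    fun n => Subtype.ext (halfReflect_halfReflect (two_dvd_sum_of_mem_oddQuad n.2))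

def halfHadamardPerm : Equiv.Perm (oddQuad 2) :=
  Function.Involutive.toPerm (fun n => ⟨halfHadamard n, halfHadamard_mem_oddQuad_two n.2⟩)
    fun n => Subtype.ext (halfHadamard_halfHadamard (two_dvd_sum_of_mem_oddQuad n.2))

def oddQuadZeroEquivTwo : oddQuad 0 ≃ oddQuad 2 where
  toFun n := ⟨halfReflect (halfHadamard n), halfReflect_halfHadamard_mem_oddQuad_two n.2⟩
  invFun n := ⟨halfHadamard (halfReflect n), halfHadamard_halfReflect_mem_oddQuad_zero n.2⟩
  left_inv n := Subtype.ext <| by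
    have h := two_dvd_sum_of_mem_oddQuad n.2
    change halfHadamard (halfReflect (halfReflect (halfHadamard n.1))) = n.1
    rw [halfReflect_halfReflect (two_dvd_sum_halfHadamard h), halfHadamard_halfHadamard h]
  right_inv n := Subtype.ext <| by
    have h := two_dvd_sum_of_mem_oddQuad n.2
    change halfReflect (halfHadamard (halfHadamard (halfReflect n.1))) = n.1
    rw [halfHadamard_halfHadamard (two_dvd_sum_halfReflect h), halfReflect_halfReflect h]

theorem term_halfReflect (τ : ℂ) (z : Quad ℂ) {n : Quad ℤ} (hn : n ∈ oddQuad 0) :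
    term τ (halfReflect z) (halfReflect n) = term τ z n := by
  have h := two_dvd_sum_of_mem_oddQuad hn
  simpa using term_congr (ε := 1)
    (by rw [chi_of_mem_oddQuad hn, chi_of_mem_oddQuad (halfReflect_mem_oddQuad_zero hn)]; norm_num)
    (by rw [map_intCast_halfReflect h, dot_halfReflect_halfReflect])
    (by rw [map_intCast_halfReflect h, dot_halfReflect_halfReflect])

theorem term_halfHadamard (τ : ℂ) (z : Quad ℂ) {n : Quad ℤ} (hn : n ∈ oddQuad 2) :
    term τ (halfHadamard z) (halfHadamard n) = term τ z n := by
  have h := two_dvd_sum_of_mem_oddQuad hn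
  simpa using term_congr (ε := 1)
    (by rw [chi_of_mem_oddQuad hn, chi_of_mem_oddQuad (halfHadamard_mem_oddQuad_two hn)]; norm_num)
    (by rw [map_intCast_halfHadamard h, dot_halfHadamard_halfHadamard])
    (by rw [map_intCast_halfHadamard h, dot_halfHadamard_halfHadamard])

theorem term_halfReflect_halfHadamard (τ : ℂ) (z : Quad ℂ) {n : Quad ℤ}
    (hn : n ∈ oddQuad 0) :
    term τ (halfReflect z) (halfReflect (halfHadamard n))
      = -term τ (halfHadamard z) n := by
  have h := two_dvd_sum_of_mem_oddQuad hn
  simpa using term_congr (ε := -1)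
    (by
      rw [chi_of_mem_oddQuad hn, chi_of_mem_oddQuad (halfReflect_halfHadamard_mem_oddQuad_two hn)]
      norm_num)
    (by
      rw [map_intCast_halfReflect (two_dvd_sum_halfHadamard h), map_intCast_halfHadamard h,
        dot_halfReflect_halfReflect, dot_halfHadamard_halfHadamard])
    (by
      rw [map_intCast_halfReflect (two_dvd_sum_halfHadamard h), map_intCast_halfHadamard h,
        dot_halfReflect_halfReflect, dot_halfHadamard_left])

theorem tsum_oddQuad_zero_term_halfReflect (τ : ℂ) (z : Quad ℂ) :
    ∑' n : oddQuad 0, term τ (halfReflect z) n = ∑' n : oddQuad 0, term τ z n := by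
  rw [← halfReflectPerm.tsum_eq]
  exact tsum_congr fun n => term_halfReflect τ z n.2

theorem tsum_oddQuad_two_term_halfHadamard (τ : ℂ) (z : Quad ℂ) :
    ∑' n : oddQuad 2, term τ (halfHadamard z) n = ∑' n : oddQuad 2, term τ z n := by
  rw [← halfHadamardPerm.tsum_eq]
  exact tsum_congr fun n => term_halfHadamard τ z n.2

theorem tsum_oddQuad_two_term_halfReflect (τ : ℂ) (z : Quad ℂ) :
    ∑' n : oddQuad 2, term τ (halfReflect z) n
      = -∑' n : oddQuad 0, term τ (halfHadamard z) n := by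
  rw [← oddQuadZeroEquivTwo.tsum_eq, ← tsum_neg]
  exact tsum_congr fun n => term_halfReflect_halfHadamard τ z n.2

theorem thetaProd_eq_halfReflect_add_halfHadamard {τ : ℂ} (hτ : 0 < τ.im) (z : Quad ℂ) :
    thetaProd τ z = thetaProd τ (halfReflect z) + thetaProd τ (halfHadamard z) := by
  rw [thetaProd_eq_add_tsum_oddQuad hτ, thetaProd_eq_add_tsum_oddQuad hτ,
    thetaProd_eq_add_tsum_oddQuad hτ, tsum_oddQuad_zero_term_halfReflect,
    tsum_oddQuad_two_term_halfHadamard, tsum_oddQuad_two_term_halfReflect]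
  ring

end Quad

/-- The quartic theta identity `θ_{D₄} = θ_{D₄}^{(2)} + θ_{D₄}^{(3)}`:
for all `τ ∈ ℍ` and `z₁,…,z₄ ∈ ℂ`,
`θ(z₁)θ(z₂)θ(z₃)θ(z₄)` equals the sum of the two half-coordinate theta-products. -/
theorem statement18 (τ z₁ z₂ z₃ z₄ : ℂ) (hτ : 0 < τ.im) :
    jtheta τ z₁ * jtheta τ z₂ * jtheta τ z₃ * jtheta τ z₄
      = jtheta τ ((-z₁ + z₂ + z₃ + z₄) / 2) * jtheta τ ((z₁ - z₂ + z₃ + z₄) / 2)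
          * jtheta τ ((z₁ + z₂ - z₃ + z₄) / 2) * jtheta τ ((z₁ + z₂ + z₃ - z₄) / 2)
        + jtheta τ ((z₁ + z₂ + z₃ + z₄) / 2) * jtheta τ ((z₁ + z₂ - z₃ - z₄) / 2)
          * jtheta τ ((z₁ - z₂ - z₃ + z₄) / 2) * jtheta τ ((z₁ - z₂ + z₃ - z₄) / 2) :=
  Quad.thetaProd_eq_halfReflect_add_halfHadamard hτ (z₁, z₂, z₃, z₄)
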